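/- arXiv:2302.06851 — 3 statements merged into one kernel-verified Lean document; each statement's English description precedes it below -/
import Mathlib

section
/- Let G be a group and F a conjugate-closed filter of subgroups of G, and equip G with the topology generated by the left cosets {gH : g ∈ G, H ∈ F}. Then a subgroup U ≤ G is open in this topology if and only if U ∈ F. -/
theorem open_subgroup_iff_mem_filter
    {G : Type*} [Group G] (F : Set (Subgroup G))
    (htop : (⊤ : Subgroup G) ∈ F)
    (hinf : ∀ H H' : Subgroup G, H ∈ F → H' ∈ F → H ⊓ H' ∈ F)
    (hup : ∀ H H' : Subgroup G, H ∈ F → H ≤ H' → H' ∈ F)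
    (hconj : ∀ (H : Subgroup G) (g : G), H ∈ F →
      H.map (MulAut.conj g).toMonoidHom ∈ F) :
    letI t : TopologicalSpace G := TopologicalSpace.generateFrom
      {s : Set G | ∃ (g : G) (H : Subgroup G), H ∈ F ∧ s = (g * ·) '' (H : Set G)}
    ∀ U : Subgroup G, @IsOpen G t (U : Set G) ↔ U ∈ F := by
  intro U
  constructor
  · intro hU
    have key : ∀ s : Set G,
        TopologicalSpace.GenerateOpen
          {s : Set G | ∃ (g : G) (H : Subgroup G), H ∈ F ∧ s = (g * ·) '' (H : Set G)} s →
        (1 : G) ∈ s → ∃ H : Subgroup G, H ∈ F ∧ (H : Set G) ⊆ s := by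
      intro s hs
      induction hs with
      | basic s hs =>
        intro h1
        obtain ⟨g, H, hH, rfl⟩ := hs
        obtain ⟨h, hh, hgh⟩ := h1
        have hg : g⁻¹ = h := by
          exact inv_eq_of_mul_eq_one_right hgh
        refine ⟨H, hH, fun x hx => ⟨g⁻¹ * x, ?_, by group⟩⟩
        rw [hg]
        exact H.mul_mem hh hx
      | univ => exact fun _ => ⟨⊤, htop, fun x _ => trivial⟩
      | inter s t _ _ ihs iht =>
        rintro ⟨h1s, h1t⟩
        obtain ⟨H, hH, hsub⟩ := ihs h1s
        obtain ⟨H', hH', hsub'⟩ := iht h1t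
        exact ⟨H ⊓ H', hinf H H' hH hH',
          fun x hx => ⟨hsub hx.1, hsub' hx.2⟩⟩
      | sUnion S _ ih =>
        rintro ⟨s, hsS, h1s⟩
        obtain ⟨H, hH, hsub⟩ := ih s hsS h1s
        exact ⟨H, hH, hsub.trans (Set.subset_sUnion_of_mem hsS)⟩
    obtain ⟨H, hH, hsub⟩ := key _ hU U.one_mem
    exact hup H U hH hsub
  · intro hU
    apply TopologicalSpace.GenerateOpen.basic
    refine ⟨1, U, hU, ?_⟩
    ext x
    simp
end

section
/- For a group G, there is a bijection between: (a) conjugate-closed filters of the lattice Subgroup G, and (b) topologies on G making G a topological group in which the open subgroups form a neighborhood basis of the identity. The bijection sends a topology to its set of open subgroups. -/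
/-!
The paper's "simple" group topologies are Mathlib's `NonarchimedeanGroup`s. A group topology is
determined by its neighbourhood filter at `1`, and in a nonarchimedean group that filter is
generated by the open subgroups, so the topology is determined by its open subgroups; these are
closed under finite intersections, enlargement and conjugation. Conversely, a conjugate-closed
filter `F` is a group filter basis, and since a subgroup is open exactly when it is a neighbourhood
of `1`, the open subgroups of the resulting topology are the subgroups containing a member of `F`,
i.e. the members of `F`.
-/

open Topology Filter

section

variable {G : Type*} [Group G]

namespace Subgroup

theorem coe_map_conj (H : Subgroup G) (g : G) :
    (H.map (MulAut.conj g).toMonoidHom : Set G) = (fun x => g⁻¹ * x * g) ⁻¹' H := by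
  rw [map_equiv_eq_comap_symm']
  ext x
  simp [mul_assoc]

theorem isOpen_map_conj [TopologicalSpace G] [ContinuousMul G] {H : Subgroup G}
    (hH : IsOpen (H : Set G)) (g : G) :
    IsOpen (H.map (MulAut.conj g).toMonoidHom : Set G) := by
  rw [coe_map_conj]
  exact hH.preimage (by fun_prop)

structure IsConjClosedFilter (F : Set (Subgroup G)) : Prop where
  top_mem : ⊤ ∈ F
  inf_mem {H K : Subgroup G} : H ∈ F → K ∈ F → H ⊓ K ∈ F
  mem_of_le {H K : Subgroup G} : H ∈ F → H ≤ K → K ∈ F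
  map_conj_mem {H : Subgroup G} (g : G) : H ∈ F → H.map (MulAut.conj g).toMonoidHom ∈ F

theorem isConjClosedFilter_iff {F : Set (Subgroup G)} :
    IsConjClosedFilter F ↔ ⊤ ∈ F
      ∧ (∀ H H' : Subgroup G, H ∈ F → H' ∈ F → H ⊓ H' ∈ F)
      ∧ (∀ H H' : Subgroup G, H ∈ F → H ≤ H' → H' ∈ F)
      ∧ (∀ (H : Subgroup G) (g : G), H ∈ F → H.map (MulAut.conj g).toMonoidHom ∈ F) :=
  ⟨fun ⟨h₁, h₂, h₃, h₄⟩ => ⟨h₁, fun _ _ => h₂, fun _ _ => h₃, fun _ => h₄⟩,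
    fun ⟨h₁, h₂, h₃, h₄⟩ => ⟨h₁, h₂ _ _, h₃ _ _, h₄ _⟩⟩

theorem isConjClosedFilter_setOf_isOpen [TopologicalSpace G] [ContinuousMul G] :
    IsConjClosedFilter {H : Subgroup G | IsOpen (H : Set G)} where
  top_mem := isOpen_univ
  inf_mem := IsOpen.inter
  mem_of_le hH hle := isOpen_mono hle hH
  map_conj_mem g hH := isOpen_map_conj hH g

namespace IsConjClosedFilter

variable {F : Set (Subgroup G)} (hF : IsConjClosedFilter F)

abbrev toGroupFilterBasis : GroupFilterBasis G where
  sets := (↑) '' F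
  nonempty := ⟨_, ⊤, hF.top_mem, rfl⟩
  inter_sets := by
    rintro _ _ ⟨H, hH, rfl⟩ ⟨K, hK, rfl⟩
    exact ⟨_, ⟨H ⊓ K, hF.inf_mem hH hK, rfl⟩, subset_rfl⟩
  one' := by
    rintro _ ⟨H, -, rfl⟩
    exact H.one_mem
  mul' := by
    rintro _ ⟨H, hH, rfl⟩
    exact ⟨H, ⟨H, hH, rfl⟩, Set.mul_subset_iff.2 fun _ ha _ hb => H.mul_mem ha hb⟩
  inv' := by
    rintro _ ⟨H, hH, rfl⟩
    exact ⟨H, ⟨H, hH, rfl⟩, fun _ hx => H.inv_mem hx⟩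
  conj' := by
    rintro g _ ⟨H, hH, rfl⟩
    refine ⟨_, ⟨_, hF.map_conj_mem g⁻¹ hH, rfl⟩, ?_⟩
    rw [coe_map_conj, inv_inv]

abbrev topology : TopologicalSpace G :=
  hF.toGroupFilterBasis.topology

theorem nhds_one_hasBasis : (@nhds G hF.topology 1).HasBasis (· ∈ F) (↑) :=
  ⟨fun _ => hF.toGroupFilterBasis.nhds_one_hasBasis.mem_iff.trans Set.exists_mem_image⟩

theorem isOpen_iff {H : Subgroup G} : IsOpen[hF.topology] (H : Set G) ↔ H ∈ F := by
  let := hF.topology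
  refine ⟨fun hH => ?_, fun hH => H.isOpen_of_mem_nhds (hF.nhds_one_hasBasis.mem_of_mem hH)⟩
  obtain ⟨K, hK, hKH⟩ := hF.nhds_one_hasBasis.mem_iff.1 (hH.mem_nhds H.one_mem)
  exact hF.mem_of_le hK hKH

theorem nonarchimedeanGroup : @NonarchimedeanGroup G _ hF.topology :=
  letI := hF.topology
  { toIsTopologicalGroup := hF.toGroupFilterBasis.isTopologicalGroup
    is_nonarchimedean := fun s hs => by
      obtain ⟨H, hH, hHs⟩ := hF.nhds_one_hasBasis.mem_iff.1 hs
      exact ⟨⟨H, hF.isOpen_iff.2 hH⟩, hHs⟩ }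

end IsConjClosedFilter

end Subgroup

theorem nonarchimedeanGroup_iff [TopologicalSpace G] : NonarchimedeanGroup G ↔
    IsTopologicalGroup G ∧
      ∀ s ∈ 𝓝 (1 : G), ∃ H : Subgroup G, IsOpen (H : Set G) ∧ (H : Set G) ⊆ s :=
  ⟨fun h => ⟨h.toIsTopologicalGroup, fun s hs =>
      let ⟨V, hV⟩ := h.is_nonarchimedean s hs; ⟨V, V.isOpen, hV⟩⟩,
    fun ⟨h, hbasis⟩ => { toIsTopologicalGroup := h
                         is_nonarchimedean := fun s hs =>
                           let ⟨H, hH, hHs⟩ := hbasis s hs; ⟨⟨H, hH⟩, hHs⟩ }⟩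

namespace NonarchimedeanGroup

theorem nhds_one_hasBasis [TopologicalSpace G] [NonarchimedeanGroup G] :
    (𝓝 (1 : G)).HasBasis (fun H : Subgroup G => IsOpen (H : Set G)) (↑) :=
  ⟨fun s => ⟨(nonarchimedeanGroup_iff.1 ‹_›).2 s,
    fun ⟨H, hH, hHs⟩ => mem_of_superset (hH.mem_nhds H.one_mem) hHs⟩⟩

theorem topologicalSpace_ext {t t' : TopologicalSpace G} (h : @NonarchimedeanGroup G _ t)
    (h' : @NonarchimedeanGroup G _ t')
    (hopen : ∀ H : Subgroup G, IsOpen[t] (H : Set G) ↔ IsOpen[t'] (H : Set G)) : t = t' :=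
  IsTopologicalGroup.ext h.toIsTopologicalGroup h'.toIsTopologicalGroup <|
    (@nhds_one_hasBasis G _ t h).eq_of_same_basis <| by
      simpa only [hopen] using @nhds_one_hasBasis G _ t' h'

end NonarchimedeanGroup

open Subgroup in
def nonarchimedeanTopologyEquivConjClosedFilter :
    {t : TopologicalSpace G // @NonarchimedeanGroup G _ t} ≃
      {F : Set (Subgroup G) // IsConjClosedFilter F} where
  toFun t :=
    letI := t.1
    haveI := t.2
    ⟨{H | IsOpen (H : Set G)}, isConjClosedFilter_setOf_isOpen⟩
  invFun F := ⟨F.2.topology, F.2.nonarchimedeanGroup⟩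
  left_inv t := Subtype.ext <|
    NonarchimedeanGroup.topologicalSpace_ext (IsConjClosedFilter.nonarchimedeanGroup _) t.2
      fun _ => IsConjClosedFilter.isOpen_iff _
  right_inv F := Subtype.ext <| Set.ext fun _ => F.2.isOpen_iff

end

theorem simple_topological_group_structures_biject_with_conjugate_closed_filters
    (G : Type*) [Group G] :
    ∃ e : {τ : TopologicalSpace G // @IsTopologicalGroup G τ _ ∧
            ∀ s ∈ @nhds G τ 1, ∃ H : Subgroup G, @IsOpen G τ (H : Set G) ∧ (H : Set G) ⊆ s}
          ≃ {F : Set (Subgroup G) // (⊤ : Subgroup G) ∈ F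
              ∧ (∀ H H' : Subgroup G, H ∈ F → H' ∈ F → H ⊓ H' ∈ F)
              ∧ (∀ H H' : Subgroup G, H ∈ F → H ≤ H' → H' ∈ F)
              ∧ (∀ (H : Subgroup G) (g : G), H ∈ F →
                  H.map (MulAut.conj g).toMonoidHom ∈ F)},
      ∀ τ, (e τ : Set (Subgroup G)) = {H : Subgroup G | @IsOpen G τ.1 (H : Set G)} :=
  ⟨(Equiv.subtypeEquivRight fun t => (@nonarchimedeanGroup_iff G _ t).symm).trans
      (nonarchimedeanTopologyEquivConjClosedFilter.trans
        (Equiv.subtypeEquivRight fun _ => Subgroup.isConjClosedFilter_iff)),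
    fun _ => rfl⟩
end

section
/- Let C be a cartesian closed category with a terminal object, and suppose C has a generating family consisting of subterminal objects, meaning: for every object X, morphisms out of X are determined by their precompositions with morphisms from subterminal objects S → X. Then every locally determined cocone {ψ_X : X → Ψ} (a family commuting with all monomorphisms) factors uniquely through the terminal cocone {! : X → 1}: ψ_X = ψ_1 ∘ !_X for all X. -/
/-!
Every morphism out of a subterminal object `S` is mono, so for `s : S ⟶ X` local determination
gives `s ≫ ψ X = ψ S = (s ≫ terminal.from X) ≫ ψ (⊤_ C)`; since subterminals generate,
`ψ X = terminal.from X ≫ ψ (⊤_ C)`.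
-/

open CategoryTheory CategoryTheory.Limits

namespace CategoryTheory

variable {C : Type*} [Category C]

theorem IsSubterminal.mono {S X : C} (hS : IsSubterminal S) (s : S ⟶ X) : Mono s :=
  ⟨fun g h _ => hS g h⟩

def IsLocallyDetermined {Ψ : C} (ψ : ∀ X : C, X ⟶ Ψ) : Prop :=
  ∀ {U X : C} (m : U ⟶ X), Mono m → m ≫ ψ X = ψ U

theorem IsLocallyDetermined.comp_eq_comp_terminal_from [HasTerminal C] {Ψ : C}
    {ψ : ∀ X : C, X ⟶ Ψ} (hψ : IsLocallyDetermined ψ) {S X : C} (hS : IsSubterminal S)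
    (s : S ⟶ X) : s ≫ ψ X = s ≫ terminal.from X ≫ ψ (⊤_ C) := by
  rw [← Category.assoc, hψ _ (hS.mono _), hψ _ (hS.mono _)]

end CategoryTheory

theorem locally_determined_cocone_factors_through_terminal_general
    {C : Type*} [Category C] [CartesianMonoidalCategory C]
    (hgen : ∀ {X Y : C} (f g : X ⟶ Y),
      (∀ (S : C), Mono (terminal.from S) → ∀ s : S ⟶ X, s ≫ f = s ≫ g) → f = g)
    (Ψ : C) (ψ : ∀ X : C, X ⟶ Ψ)
    (hloc : ∀ {U X : C} (m : U ⟶ X), Mono m → m ≫ ψ X = ψ U) :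
    ∀ X : C, ψ X = terminal.from X ≫ ψ (⊤_ C) := fun _ =>
  hgen _ _ fun _ _ s =>
    IsLocallyDetermined.comp_eq_comp_terminal_from hloc isSubterminal_of_mono_terminal_from s

theorem locally_determined_cocone_factors_through_terminal
    {C : Type*} [Category C] [CartesianMonoidalCategory C] [MonoidalClosed C]
    (hgen : ∀ {X Y : C} (f g : X ⟶ Y),
      (∀ (S : C), Mono (terminal.from S) → ∀ s : S ⟶ X, s ≫ f = s ≫ g) → f = g)
    (Ψ : C) (ψ : ∀ X : C, X ⟶ Ψ)
    (hloc : ∀ {U X : C} (m : U ⟶ X), Mono m → m ≫ ψ X = ψ U) :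
    ∀ X : C, ψ X = terminal.from X ≫ ψ (⊤_ C) :=
  locally_determined_cocone_factors_through_terminal_general hgen Ψ ψ hloc
end
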